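/- arXiv:1303.3524 — 3 statements merged into one kernel-verified Lean document; each statement's English description precedes it below -/
import Mathlib

section
/- For every integer k ≥ 15, the smaller root z*_k = (5k − 12 − √(k² − 12k + 60))/6 of the quadratic 3z² + (12 − 5k)z + (2k² − 9k + 7) satisfies (2/3)k − 4/3 ≤ z*_k ≤ (2/3)k − 1, and moreover 0 ≤ z*_{k+1} − z*_k ≤ 1. -/
/-!
Since `k² − 12k + 60 = (k − 6)² + 24`, the square root lies between `k − 6` (always) and `k − 4`
(once `k ≥ 11`), and these two comparisons are exactly the two bounds on `z*_k`. Applying the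
bounds at `k` and `k + 1` traps the increment `z*_{k+1} − z*_k` in `[1/3, 1]`.
-/

noncomputable def zstar (k : ℝ) : ℝ :=
  (5 * k - 12 - Real.sqrt (k ^ 2 - 12 * k + 60)) / 6

lemma sub_six_le_sqrt (x : ℝ) : x - 6 ≤ Real.sqrt (x ^ 2 - 12 * x + 60) :=
  Real.le_sqrt_of_sq_le (by nlinarith)

lemma sqrt_le_sub_four {x : ℝ} (hx : 11 ≤ x) : Real.sqrt (x ^ 2 - 12 * x + 60) ≤ x - 4 :=
  (Real.sqrt_le_left (by linarith)).2 (by nlinarith)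

lemma zstar_le (x : ℝ) : zstar x ≤ 2 / 3 * x - 1 := by
  have := sub_six_le_sqrt x
  unfold zstar
  linarith

lemma le_zstar {x : ℝ} (hx : 11 ≤ x) : 2 / 3 * x - 4 / 3 ≤ zstar x := by
  have := sqrt_le_sub_four hx
  unfold zstar
  linarith

lemma zstar_succ_sub_mem_Icc {x : ℝ} (hx : 11 ≤ x) :
    1 / 3 ≤ zstar (x + 1) - zstar x ∧ zstar (x + 1) - zstar x ≤ 1 := by
  have := le_zstar hx
  have := le_zstar (show 11 ≤ x + 1 by linarith)
  have := zstar_le x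
  have := zstar_le (x + 1)
  constructor <;> linarith

theorem stmt_9 (k : ℤ) (hk : 15 ≤ k) :
    (2 / 3) * (k : ℝ) - 4 / 3 ≤ zstar k ∧ zstar k ≤ (2 / 3) * (k : ℝ) - 1 ∧
    0 ≤ zstar ((k : ℝ) + 1) - zstar k ∧ zstar ((k : ℝ) + 1) - zstar k ≤ 1 := by
  have hk' : (11 : ℝ) ≤ k := by exact_mod_cast (show (11 : ℤ) ≤ k by omega)
  obtain ⟨hinc_lower, hinc_upper⟩ := zstar_succ_sub_mem_Icc hk'
  exact ⟨le_zstar hk', zstar_le k, by linarith, hinc_upper⟩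
end

section
/- With δ = 10⁻³: for every integer k ≥ 15 and every real λ ≥ (7k−1)/3, (1+δ)·(eλ/(k−1))^{k−1}·e^{1−(1−δ)λ}·(5/2)·λ^{5/3} ≤ 1. -/
/-!
Write `m = k - 1`. Up to a constant depending on `m`, the left side is
`λ ^ (m + 5/3) * e^(-0.999 λ)`, which decreases once `λ ≥ (m + 5/3) / 0.999`; so it suffices to
take `λ = L := (7m + 6)/3`. There every factor is estimated by `x ^ a ≤ e^(a (x - 1))`:
`(L / m) ^ m ≤ (7/3) ^ m e^(6/7)` and `L ^ (5/3) ≤ (104/3) ^ (5/3) e^(35 (m - 14)/312)`.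
Collecting exponentials, passing from `m` to `m + 1` multiplies the bound by
`(7/3) e^(-1.2188) < 0.7`, and at `m = 14` it is a numerical inequality with a margin of about 8%.
-/

open Real

lemma rpow_le_exp_mul_sub_one {x a : ℝ} (hx : 0 ≤ x) (ha : 0 ≤ a) :
    x ^ a ≤ exp (a * (x - 1)) := by
  calc x ^ a ≤ exp (x - 1) ^ a := by
        gcongr
        linarith [add_one_le_exp (x - 1)]
    _ = exp (a * (x - 1)) := by rw [← exp_mul, mul_comm]

lemma pow_le_exp_mul_sub_one {x : ℝ} (hx : 0 ≤ x) (n : ℕ) :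
    x ^ n ≤ exp (n * (x - 1)) := by
  rw [← rpow_natCast]
  exact rpow_le_exp_mul_sub_one hx n.cast_nonneg

lemma rpow_mul_exp_neg_le_of_le {A c L lam : ℝ} (hA : 0 ≤ A) (hL : 0 < L) (hAL : A ≤ c * L)
    (hlam : L ≤ lam) : lam ^ A * exp (-(c * lam)) ≤ L ^ A * exp (-(c * L)) := by
  have hratio : 0 ≤ lam / L - 1 := by rw [sub_nonneg, one_le_div hL]; exact hlam
  have hexponent : A * (lam / L - 1) ≤ c * lam - c * L := by
    calc A * (lam / L - 1) ≤ c * L * (lam / L - 1) := by gcongr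
      _ = c * lam - c * L := by field_simp
  calc lam ^ A * exp (-(c * lam)) = L ^ A * ((lam / L) ^ A * exp (-(c * lam))) := by
        rw [div_rpow (hL.le.trans hlam) hL.le]; field_simp
    _ ≤ L ^ A * (exp (c * lam - c * L) * exp (-(c * lam))) := by
        gcongr
        exact (rpow_le_exp_mul_sub_one (div_nonneg (hL.le.trans hlam) hL.le) hA).trans
          (exp_le_exp.2 hexponent)
    _ = L ^ A * exp (-(c * L)) := by rw [← exp_add]; ring_nf

-- `γ(m + 1, λ) · (5/2) λ^(5/3)` in the notation of the paper, with `δ = 10⁻³`.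
noncomputable def gammaTerm (m : ℕ) (lam : ℝ) : ℝ :=
  (1 + 1 / 1000) * (exp 1 * lam / m) ^ m * exp (1 - (1 - 1 / 1000) * lam) * (5 / 2) *
    lam ^ ((5 : ℝ) / 3)

lemma gammaTerm_eq {m : ℕ} {lam : ℝ} (hlam : 0 < lam) :
    gammaTerm m lam = 1001 / 400 * exp (m + 1) / (m : ℝ) ^ m *
      (lam ^ ((m : ℝ) + 5 / 3) * exp (-(999 / 1000 * lam))) := by
  rw [gammaTerm, rpow_add hlam, rpow_natCast, div_pow, mul_pow, ← exp_nat_mul, exp_add (m : ℝ),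
    sub_eq_add_neg, exp_add]
  ring_nf

lemma gammaTerm_le_of_le {m : ℕ} {L lam : ℝ} (hL : 0 < L) (hmL : m + 5 / 3 ≤ 999 / 1000 * L)
    (hlam : L ≤ lam) : gammaTerm m lam ≤ gammaTerm m L := by
  rw [gammaTerm_eq (hL.trans_le hlam), gammaTerm_eq hL]
  exact mul_le_mul_of_nonneg_left (rpow_mul_exp_neg_le_of_le (by positivity) hL hmL hlam)
    (by positivity)

lemma threshold_div_pow_le {m : ℕ} (hm : 0 < m) :
    ((7 * m + 6) / 3 / m : ℝ) ^ m ≤ (7 / 3) ^ m * exp (6 / 7) := by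
  have hm' : (0 : ℝ) < m := Nat.cast_pos.2 hm
  calc ((7 * m + 6) / 3 / m : ℝ) ^ m = (7 / 3) ^ m * (1 + 6 / (7 * m)) ^ m := by
        rw [← mul_pow]; congr 1; field_simp
    _ ≤ (7 / 3) ^ m * exp (m * (1 + 6 / (7 * m) - 1)) := by
        gcongr; exact pow_le_exp_mul_sub_one (by positivity) m
    _ = (7 / 3) ^ m * exp (6 / 7) := by congr 2; field_simp; ring

lemma rpow_five_thirds_le : ((104 : ℝ) / 3) ^ ((5 : ℝ) / 3) ≤ 369 := by
  rw [← pow_le_pow_iff_left₀ (by positivity) (by norm_num) (three_ne_zero),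
    ← rpow_natCast, ← rpow_mul (by norm_num)]
  norm_num

lemma threshold_rpow_le (n : ℕ) :
    ((7 * n + 104) / 3 : ℝ) ^ ((5 : ℝ) / 3) ≤ 369 * exp (35 * n / 312) := by
  calc ((7 * n + 104) / 3 : ℝ) ^ ((5 : ℝ) / 3)
      = (104 / 3 : ℝ) ^ ((5 : ℝ) / 3) * (1 + 7 * n / 104) ^ ((5 : ℝ) / 3) := by
        rw [← mul_rpow (by norm_num) (by positivity)]; ring_nf
    _ ≤ 369 * exp (5 / 3 * (1 + 7 * n / 104 - 1)) := by
        gcongr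
        · exact rpow_five_thirds_le
        · exact rpow_le_exp_mul_sub_one (by positivity) (by norm_num)
    _ = 369 * exp (35 * n / 312) := by ring_nf

lemma threshold_constant_le :
    1001 / 400 * 369 * (7 / 3 : ℝ) ^ 14 ≤ exp (16428 / 875) := by
  have he : (2.7182 : ℝ) ≤ exp 1 := (lt_trans (by norm_num) exp_one_gt_d9).le
  refine le_of_pow_le_pow_left₀ (n := 10) (by norm_num) (exp_nonneg _) ?_
  calc (1001 / 400 * 369 * (7 / 3 : ℝ) ^ 14) ^ 10 ≤ 2.7182 ^ 187 := by norm_num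
    _ ≤ exp 1 ^ 187 := by gcongr
    _ ≤ exp (16428 / 875) ^ 10 := by
        rw [← exp_nat_mul, ← exp_nat_mul]; exact exp_le_exp.2 (by norm_num)

lemma seven_thirds_le_exp : (7 / 3 : ℝ) ≤ exp (23767 / 19500) :=
  calc (7 / 3 : ℝ) ≤ exp 1 := by linarith [exp_one_gt_d9]
    _ ≤ exp (23767 / 19500) := exp_le_exp.2 (by norm_num)

lemma gammaTerm_threshold_le_one {m : ℕ} (hm : 14 ≤ m) :
    gammaTerm m ((7 * m + 6) / 3) ≤ 1 := by
  obtain ⟨n, rfl⟩ : ∃ n, m = n + 14 := ⟨m - 14, by omega⟩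
  set L : ℝ := (7 * ((n + 14 : ℕ) : ℝ) + 6) / 3 with hL
  have hL' : L = (7 * n + 104) / 3 := by rw [hL]; push_cast; ring
  have hexp : exp (6 / 7) * exp (35 * n / 312) * exp (((n + 14 : ℕ) : ℝ) + 1 - 999 / 1000 * L) =
      exp (-(16428 / 875)) * exp (-(23767 / 19500)) ^ n := by
    rw [← exp_nat_mul, ← exp_add, ← exp_add, ← exp_add, hL']; push_cast; ring_nf
  have hratio : (7 / 3 : ℝ) * exp (-(23767 / 19500)) ≤ 1 := by
    rw [exp_neg, ← div_eq_mul_inv, div_le_one (exp_pos _)]; exact seven_thirds_le_exp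
  have hconst : 1001 / 400 * 369 * (7 / 3 : ℝ) ^ 14 * exp (-(16428 / 875)) ≤ 1 := by
    rw [exp_neg, ← div_eq_mul_inv, div_le_one (exp_pos _)]; exact threshold_constant_le
  calc gammaTerm (n + 14) L
      = 1001 / 400 * (L / ((n + 14 : ℕ) : ℝ)) ^ (n + 14) * L ^ ((5 : ℝ) / 3) *
          exp (((n + 14 : ℕ) : ℝ) + 1 - 999 / 1000 * L) := by
        rw [gammaTerm, mul_div_assoc, mul_pow, ← exp_nat_mul, mul_one, add_sub_assoc, exp_add,
          show (1 : ℝ) - 1 / 1000 = 999 / 1000 by norm_num]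
        ring
    _ ≤ 1001 / 400 * ((7 / 3) ^ (n + 14) * exp (6 / 7)) * (369 * exp (35 * n / 312)) *
          exp (((n + 14 : ℕ) : ℝ) + 1 - 999 / 1000 * L) := by
        gcongr
        · exact threshold_div_pow_le (by omega)
        · rw [hL']; exact threshold_rpow_le n
    _ = (1001 / 400 * 369 * (7 / 3 : ℝ) ^ 14 * exp (-(16428 / 875))) *
          ((7 / 3 : ℝ) * exp (-(23767 / 19500))) ^ n := by
        rw [mul_pow, pow_add]
        linear_combination 1001 / 400 * 369 * (7 / 3 : ℝ) ^ 14 * (7 / 3) ^ n * hexp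
    _ ≤ 1 := mul_le_one₀ hconst (by positivity) (pow_le_one₀ (by positivity) hratio)

theorem stmt_14 (k : ℕ) (hk : 15 ≤ k) (lam : ℝ) (hlam : (7 * (k : ℝ) - 1) / 3 ≤ lam) :
    (1 + 1 / 1000) * (Real.exp 1 * lam / ((k : ℝ) - 1)) ^ (k - 1) *
      Real.exp (1 - (1 - 1 / 1000) * lam) * (5 / 2) * lam ^ ((5 : ℝ) / 3) ≤ 1 := by
  obtain ⟨m, rfl⟩ : ∃ m, k = m + 1 := ⟨k - 1, by omega⟩
  have hthreshold : (7 * ((m + 1 : ℕ) : ℝ) - 1) / 3 = (7 * m + 6) / 3 := by push_cast; ring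
  rw [hthreshold] at hlam
  rw [Nat.add_sub_cancel, Nat.cast_succ, add_sub_cancel_right]
  calc gammaTerm m lam ≤ gammaTerm m ((7 * m + 6) / 3) :=
        gammaTerm_le_of_le (by positivity) (by linarith [m.cast_nonneg (α := ℝ)]) hlam
    _ ≤ 1 := gammaTerm_threshold_le_one (by omega)
end

section
/- Let G be a finite simple graph, H a spanning subgraph of G, and let K = V(G^{(k)}) denote the vertex set of the k-core of G. Define B = { u ∈ K : u has at least k neighbors in K in the graph H }. Let F be any spanning subgraph of G satisfying E(H) ⊆ E(F) ⊆ E(G) such that every edge of E(G) \ E(F) has both endpoints in B. Then the k-core of F has the same vertex set as the k-core of G, i.e., V(F^{(k)}) = K. -/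
/-!
`K` is itself a witness for the `k`-core of `F`: a vertex of `K \ B` keeps all its `G`-edges in
`F`, hence its `k` neighbours in `K`, while a vertex of `B` has `k` neighbours in `K` already in
`H ≤ F`. Conversely the `k`-core is monotone in the graph and `F ≤ G`.
-/

/-- The vertex set of the `k`-core of a graph: the union of all vertex sets `S`
such that every vertex of `S` has at least `k` neighbors inside `S`
(equivalently, the vertex set of the maximal subgraph of minimum degree `≥ k`). -/
def coreSet {V : Type*} (G : SimpleGraph V) (k : ℕ) : Set V :=
  ⋃₀ {S : Set V | ∀ v ∈ S, k ≤ (S ∩ G.neighborSet v).ncard}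

namespace SimpleGraph

variable {V : Type*} {G G' : SimpleGraph V} {k : ℕ}

lemma ncard_inter_neighborSet_mono [Finite V] (h : G ≤ G') (S : Set V) (v : V) :
    (S ∩ G.neighborSet v).ncard ≤ (S ∩ G'.neighborSet v).ncard :=
  Set.ncard_le_ncard (Set.inter_subset_inter_right _ fun _ hx => h hx)

lemma subset_coreSet {S : Set V} (hS : ∀ v ∈ S, k ≤ (S ∩ G.neighborSet v).ncard) :
    S ⊆ coreSet G k :=
  Set.subset_sUnion_of_mem hS

lemma coreSet_mono [Finite V] (h : G ≤ G') (k : ℕ) : coreSet G k ⊆ coreSet G' k :=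
  Set.sUnion_subset fun _ hS =>
    subset_coreSet fun v hv => (hS v hv).trans (ncard_inter_neighborSet_mono h _ v)

lemma le_ncard_coreSet_inter_neighborSet [Finite V] {v : V} (hv : v ∈ coreSet G k) :
    k ≤ (coreSet G k ∩ G.neighborSet v).ncard := by
  obtain ⟨S, hS, hvS⟩ := hv
  exact (hS v hvS).trans <| Set.ncard_le_ncard <|
    Set.inter_subset_inter_left _ (Set.subset_sUnion_of_mem hS)

end SimpleGraph

open SimpleGraph

theorem stmt_17_general {V : Type*} [Fintype V] (k : ℕ) (G H F : SimpleGraph V)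
    (hHF : H ≤ F) (hFG : F ≤ G)
    (B : Set V)
    (hB : B = {u ∈ coreSet G k | k ≤ (coreSet G k ∩ H.neighborSet u).ncard})
    (hedges : ∀ u v : V, G.Adj u v → ¬ F.Adj u v → u ∈ B ∧ v ∈ B) :
    coreSet F k = coreSet G k := by
  refine (coreSet_mono hFG k).antisymm (subset_coreSet fun v hv => ?_)
  by_cases hvB : v ∈ B
  · rw [hB] at hvB
    exact hvB.2.trans (ncard_inter_neighborSet_mono hHF _ v)
  · have hGF : G.neighborSet v ⊆ F.neighborSet v := fun x hGx => by
      by_contra hFx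
      exact hvB (hedges v x hGx hFx).1
    calc k ≤ (coreSet G k ∩ G.neighborSet v).ncard := le_ncard_coreSet_inter_neighborSet hv
      _ ≤ (coreSet G k ∩ F.neighborSet v).ncard :=
        Set.ncard_le_ncard (Set.inter_subset_inter_right _ hGF)

theorem stmt_17 {V : Type*} [Fintype V] (k : ℕ) (G H F : SimpleGraph V)
    (hHG : H ≤ G) (hHF : H ≤ F) (hFG : F ≤ G)
    (B : Set V)
    (hB : B = {u ∈ coreSet G k | k ≤ (coreSet G k ∩ H.neighborSet u).ncard})
    (hedges : ∀ u v : V, G.Adj u v → ¬ F.Adj u v → u ∈ B ∧ v ∈ B) :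
    coreSet F k = coreSet G k :=
  stmt_17_general k G H F hHF hFG B hB hedges
end
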